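/- arXiv:2302.02561 — 6 statements merged into one kernel-verified Lean document; each statement's English description precedes it below -/
import Mathlib

section
/- Let X, Y, Z be nonempty finite types, let p be a pmf on X × Y with marginals p_X and p_Y, let q be a kernel from X to Z, and let c be a kernel from Z to Y with c(y|z) > 0 whenever ∑_x p(x,y)·q(z|x) > 0. Then ∑_{x,y,z} p(x,y)·q(z|x)·log c(y|z) ≤ I_p(X;Y) − H(p_Y). -/
/-- **Upper bound on the expected label log-likelihood through an encoding.**
For a pmf `p` on `X × Y`, an encoder kernel `q` from `X` to `Z`, and a decoder
kernel `c` from `Z` to `Y` positive on the support of the induced joint,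
`∑ x y z, p x y * q x z * log (c z y) ≤ I_p(X;Y) - H(p_Y)`. -/
theorem label_loglik_le_mi_sub_entropy {X Y Z : Type*}
    [Fintype X] [Fintype Y] [Fintype Z] [Nonempty X] [Nonempty Y] [Nonempty Z]
    (p : X → Y → ℝ) (hp0 : ∀ x y, 0 ≤ p x y) (hp1 : ∑ x, ∑ y, p x y = 1)
    (q : X → Z → ℝ) (hq0 : ∀ x z, 0 ≤ q x z) (hq1 : ∀ x, ∑ z, q x z = 1)
    (c : Z → Y → ℝ) (hc0 : ∀ z y, 0 ≤ c z y) (hc1 : ∀ z, ∑ y, c z y = 1)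
    (hcpos : ∀ y z, 0 < ∑ x, p x y * q x z → 0 < c z y) :
    ∑ x, ∑ y, ∑ z, p x y * q x z * Real.log (c z y)
      ≤ (∑ x, ∑ y, p x y * Real.log (p x y / ((∑ y', p x y') * (∑ x', p x' y))))
        - (-∑ y, (∑ x, p x y) * Real.log (∑ x, p x y)) := by
  -- Step 1: RHS equals the conditional-entropy form ∑ p log (p / pX)
  have hRHS : (∑ x, ∑ y, p x y * Real.log (p x y / ((∑ y', p x y') * (∑ x', p x' y))))
        - (-∑ y, (∑ x, p x y) * Real.log (∑ x, p x y))
      = ∑ x, ∑ y, p x y * Real.log (p x y / (∑ y', p x y')) := by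
    rw [sub_neg_eq_add]
    have hB : (∑ y, (∑ x, p x y) * Real.log (∑ x, p x y))
        = ∑ x, ∑ y, p x y * Real.log (∑ x', p x' y) := by
      rw [Finset.sum_comm]
      exact Finset.sum_congr rfl fun y _ => Finset.sum_mul _ _ _
    rw [hB, ← Finset.sum_add_distrib]
    refine Finset.sum_congr rfl fun x _ => ?_
    rw [← Finset.sum_add_distrib]
    refine Finset.sum_congr rfl fun y _ => ?_
    rcases eq_or_lt_of_le (hp0 x y) with h | h
    · simp [← h]
    · have hpX : 0 < ∑ y', p x y' :=
        lt_of_lt_of_le h (Finset.single_le_sum (fun i _ => hp0 x i) (Finset.mem_univ y))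
      have hpY : 0 < ∑ x', p x' y :=
        lt_of_lt_of_le h (Finset.single_le_sum (fun i _ => hp0 i y) (Finset.mem_univ x))
      rw [Real.log_div (ne_of_gt h) (by positivity), Real.log_div (ne_of_gt h) (ne_of_gt hpX),
        Real.log_mul (ne_of_gt hpX) (ne_of_gt hpY)]
      ring
  rw [hRHS]
  -- Step 2: rewrite RHS as a triple sum
  have hRHS2 : (∑ x, ∑ y, p x y * Real.log (p x y / (∑ y', p x y')))
      = ∑ x, ∑ y, ∑ z, p x y * q x z * Real.log (p x y / (∑ y', p x y')) := by
    refine Finset.sum_congr rfl fun x _ => Finset.sum_congr rfl fun y _ => ?_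
    calc p x y * Real.log (p x y / (∑ y', p x y'))
        = (p x y * Real.log (p x y / (∑ y', p x y'))) * ∑ z, q x z := by rw [hq1]; ring
      _ = ∑ z, p x y * q x z * Real.log (p x y / (∑ y', p x y')) := by
          rw [Finset.mul_sum]; exact Finset.sum_congr rfl fun z _ => by ring
  rw [hRHS2]
  refine Finset.sum_le_sum fun x _ => ?_
  rw [Finset.sum_comm]
  conv_rhs => rw [Finset.sum_comm]
  refine Finset.sum_le_sum fun z _ => ?_
  -- Gibbs inequality for fixed (x,z)
  have key : ∀ y, p x y * q x z * Real.log (c z y)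
      - p x y * q x z * Real.log (p x y / (∑ y', p x y'))
      ≤ q x z * (∑ y', p x y') * c z y - p x y * q x z := by
    intro y
    by_cases hp' : p x y = 0
    · simp only [hp', zero_mul, sub_zero, mul_zero]
      have h := Finset.sum_nonneg fun y' (_ : y' ∈ Finset.univ) => hp0 x y'
      exact mul_nonneg (mul_nonneg (hq0 x z) h) (hc0 z y)
    by_cases hq' : q x z = 0
    · simp [hq']
    have hppos : 0 < p x y := (hp0 x y).lt_of_ne (Ne.symm hp')
    have hqpos : 0 < q x z := (hq0 x z).lt_of_ne (Ne.symm hq')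
    have hpX : 0 < ∑ y', p x y' :=
      lt_of_lt_of_le hppos (Finset.single_le_sum (fun i _ => hp0 x i) (Finset.mem_univ y))
    have hsum : 0 < ∑ x', p x' y * q x' z :=
      lt_of_lt_of_le (mul_pos hppos hqpos)
        (Finset.single_le_sum (fun i _ => mul_nonneg (hp0 i y) (hq0 i z)) (Finset.mem_univ x))
    have hc' : 0 < c z y := hcpos y z hsum
    have hlog : Real.log (c z y) - Real.log (p x y / (∑ y', p x y'))
        = Real.log (c z y * (∑ y', p x y') / p x y) := by
      rw [Real.log_div (by positivity) hp', Real.log_div hp' (ne_of_gt hpX),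
        Real.log_mul (ne_of_gt hc') (ne_of_gt hpX)]
      ring
    calc p x y * q x z * Real.log (c z y) - p x y * q x z * Real.log (p x y / (∑ y', p x y'))
        = p x y * q x z * (Real.log (c z y) - Real.log (p x y / (∑ y', p x y'))) := by ring
      _ = p x y * q x z * Real.log (c z y * (∑ y', p x y') / p x y) := by rw [hlog]
      _ ≤ p x y * q x z * (c z y * (∑ y', p x y') / p x y - 1) := by
          refine mul_le_mul_of_nonneg_left (Real.log_le_sub_one_of_pos (by positivity)) ?_
          positivity
      _ = q x z * (∑ y', p x y') * c z y - p x y * q x z := by field_simp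
  have hsumle := Finset.sum_le_sum fun y (_ : y ∈ Finset.univ) => key y
  have hzero : ∑ y, (q x z * (∑ y', p x y') * c z y - p x y * q x z) = 0 := by
    rw [Finset.sum_sub_distrib, ← Finset.mul_sum, hc1, ← Finset.sum_mul]
    ring
  rw [Finset.sum_sub_distrib, hzero] at hsumle
  linarith
end

section
/- Let X, Y, Z be nonempty finite types with an injection ι : X → Z, and let p be a pmf on X × Y with marginals p_X and p_Y. Then the supremum, over all kernels q from X to Z and all kernels c from Z to Y with c(y|z) > 0 whenever ∑_x p(x,y)·q(z|x) > 0, of ∑_{x,y,z} p(x,y)·q(z|x)·log c(y|z) equals I_p(X;Y) − H(p_Y); moreover this supremum is attained (for instance by the deterministic encoder q(z|x) = 1 if z = ι(x) and 0 otherwise, together with a decoder c satisfying c(y|ι(x)) = p(x,y)/p_X(x) whenever p_X(x) > 0). -/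
open Finset

private lemma gibbs' {Y : Type*} [Fintype Y] (a c : Y → ℝ)
    (ha0 : ∀ y, 0 ≤ a y) (ha1 : ∑ y, a y = 1)
    (hc0 : ∀ y, 0 ≤ c y) (hc1 : ∑ y, c y = 1)
    (hpos : ∀ y, 0 < a y → 0 < c y) :
    ∑ y, a y * Real.log (c y) ≤ ∑ y, a y * Real.log (a y) := by
  have key : ∑ y, (a y * Real.log (c y) - a y * Real.log (a y)) ≤ ∑ y, (c y - a y) := by
    apply Finset.sum_le_sum
    intro y _
    rcases eq_or_lt_of_le (ha0 y) with h | h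
    · simp [← h, hc0 y]
    · have hcy := hpos y h
      rw [← mul_sub, ← Real.log_div (ne_of_gt hcy) (ne_of_gt h)]
      have hlog := Real.log_le_sub_one_of_pos (div_pos hcy h)
      calc a y * Real.log (c y / a y) ≤ a y * (c y / a y - 1) :=
            mul_le_mul_of_nonneg_left hlog (le_of_lt h)
        _ = c y - a y := by field_simp
  rw [Finset.sum_sub_distrib, Finset.sum_sub_distrib, ha1, hc1] at key
  linarith

private lemma aux1 (a b c L : ℝ) (hb : b ≠ 0) : a * c * L = a * b * (c / b * L) := by
  field_simp

private lemma aux2 (a b c L : ℝ) (hb : b ≠ 0) : a * b * (c / b * L) = a * (c * L) := by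
  field_simp

/-- **The supremum of the expected label log-likelihood over encoder/decoder pairs**
equals `I_p(X;Y) - H(p_Y)` and is attained (e.g. by the deterministic encoder along
an injection `ι : X → Z` together with the posterior decoder). -/
theorem sup_label_loglik {X Y Z : Type*}
    [Fintype X] [Fintype Y] [Fintype Z] [Nonempty X] [Nonempty Y] [Nonempty Z]
    (ι : X → Z) (hι : Function.Injective ι)
    (p : X → Y → ℝ) (hp0 : ∀ x y, 0 ≤ p x y) (hp1 : ∑ x, ∑ y, p x y = 1) :
    IsGreatest
      {v : ℝ | ∃ (q : X → Z → ℝ) (c : Z → Y → ℝ),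
        (∀ x z, 0 ≤ q x z) ∧ (∀ x, ∑ z, q x z = 1) ∧
        (∀ z y, 0 ≤ c z y) ∧ (∀ z, ∑ y, c z y = 1) ∧
        (∀ y z, 0 < ∑ x, p x y * q x z → 0 < c z y) ∧
        v = ∑ x, ∑ y, ∑ z, p x y * q x z * Real.log (c z y)}
      ((∑ x, ∑ y, p x y * Real.log (p x y / ((∑ y', p x y') * (∑ x', p x' y))))
        - (-∑ y, (∑ x, p x y) * Real.log (∑ x, p x y))) := by
  classical
  have hpX0 : ∀ x, 0 ≤ ∑ y, p x y := fun x => Finset.sum_nonneg fun y _ => hp0 x y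
  have hple : ∀ x y, p x y ≤ ∑ y', p x y' := fun x y =>
    Finset.single_le_sum (fun y' _ => hp0 x y') (Finset.mem_univ y)
  have hpleY : ∀ x y, p x y ≤ ∑ x', p x' y := fun x y =>
    Finset.single_le_sum (fun x' _ => hp0 x' y) (Finset.mem_univ x)
  -- simplify the target
  have hT : (∑ x, ∑ y, p x y * Real.log (p x y / ((∑ y', p x y') * (∑ x', p x' y))))
        - (-∑ y, (∑ x, p x y) * Real.log (∑ x, p x y))
      = ∑ x, ∑ y, p x y * Real.log (p x y / ∑ y', p x y') := by
    have h1 : ∑ y, (∑ x, p x y) * Real.log (∑ x, p x y)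
        = ∑ x, ∑ y, p x y * Real.log (∑ x', p x' y) := by
      rw [Finset.sum_comm]
      exact Finset.sum_congr rfl fun y _ => Finset.sum_mul _ _ _
    rw [sub_neg_eq_add, h1, ← Finset.sum_add_distrib]
    apply Finset.sum_congr rfl
    intro x _
    rw [← Finset.sum_add_distrib]
    apply Finset.sum_congr rfl
    intro y _
    rcases eq_or_lt_of_le (hp0 x y) with h | h
    · simp [← h]
    · have hx : 0 < ∑ y', p x y' := lt_of_lt_of_le h (hple x y)
      have hy : 0 < ∑ x', p x' y := lt_of_lt_of_le h (hpleY x y)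
      rw [Real.log_div (ne_of_gt h) (by positivity),
        Real.log_mul (ne_of_gt hx) (ne_of_gt hy),
        Real.log_div (ne_of_gt h) (ne_of_gt hx)]
      ring
  rw [hT]
  constructor
  · -- membership: deterministic encoder + posterior decoder
    refine ⟨fun x z => if z = ι x then 1 else 0,
      fun z y => if h : ∃ x, ι x = z ∧ 0 < ∑ y', p x y'
        then p h.choose y / ∑ y', p h.choose y'
        else (Fintype.card Y : ℝ)⁻¹, ?_, ?_, ?_, ?_, ?_, ?_⟩
    · intro x z; dsimp only; split <;> norm_num
    · intro x; simp
    · intro z y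
      dsimp only
      split
      · next h => exact div_nonneg (hp0 _ _) (hpX0 _)
      · positivity
    · intro z
      by_cases h : ∃ x, ι x = z ∧ 0 < ∑ y', p x y'
      · simp only [dif_pos h]
        rw [← Finset.sum_div, div_self (ne_of_gt h.choose_spec.2)]
      · simp only [dif_neg h, Finset.sum_const, Finset.card_univ, nsmul_eq_mul]
        rw [mul_inv_cancel₀]
        exact_mod_cast Fintype.card_ne_zero
    · intro y z hs
      have : ∃ x, 0 < p x y * (if z = ι x then 1 else 0) := by
        by_contra hcon
        push_neg at hcon
        have : ∑ x, p x y * (if z = ι x then 1 else 0) ≤ 0 :=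
          Finset.sum_nonpos fun x _ => hcon x
        linarith
      obtain ⟨x, hx⟩ := this
      have hz : z = ι x := by
        by_contra hne
        simp [hne] at hx
      have hpxy : 0 < p x y := by
        rw [hz, if_pos rfl, mul_one] at hx
        exact hx
      have hex : ∃ x', ι x' = z ∧ 0 < ∑ y', p x' y' :=
        ⟨x, hz.symm, lt_of_lt_of_le hpxy (hple x y)⟩
      have hch : hex.choose = x := hι (hex.choose_spec.1.trans hz)
      simp only [dif_pos hex, hch]
      exact div_pos hpxy (lt_of_lt_of_le hpxy (hple x y))
    · apply Finset.sum_congr rfl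
      intro x _
      apply Finset.sum_congr rfl
      intro y _
      have hsum : ∑ z, p x y * (if z = ι x then 1 else 0) *
          Real.log (if h : ∃ x', ι x' = z ∧ 0 < ∑ y', p x' y'
            then p h.choose y / ∑ y', p h.choose y'
            else (Fintype.card Y : ℝ)⁻¹)
          = p x y * Real.log (if h : ∃ x', ι x' = ι x ∧ 0 < ∑ y', p x' y'
            then p h.choose y / ∑ y', p h.choose y'
            else (Fintype.card Y : ℝ)⁻¹) := by
        rw [Finset.sum_eq_single (ι x)]
        · simp
        · intro z _ hz; simp [hz]
        · intro h; exact absurd (Finset.mem_univ _) h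
      rw [hsum]
      rcases eq_or_lt_of_le (hp0 x y) with h | h
      · simp [← h]
      · have hex : ∃ x', ι x' = ι x ∧ 0 < ∑ y', p x' y' :=
          ⟨x, rfl, lt_of_lt_of_le h (hple x y)⟩
        have hch : hex.choose = x := hι hex.choose_spec.1
        simp only [dif_pos hex, hch]
  · -- upper bound
    rintro v ⟨q, c, hq0, hq1, hc0, hc1, hpos, rfl⟩
    apply Finset.sum_le_sum
    intro x _
    rw [Finset.sum_comm]
    have hr : ∑ y, p x y * Real.log (p x y / ∑ y', p x y')
        = ∑ z, q x z * ∑ y, p x y * Real.log (p x y / ∑ y', p x y') := by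
      rw [← Finset.sum_mul, hq1 x, one_mul]
    rw [hr]
    apply Finset.sum_le_sum
    intro z _
    rcases eq_or_lt_of_le (hq0 x z) with hqz | hqz
    · simp [← hqz]
    rcases eq_or_lt_of_le (hpX0 x) with hpx | hpx
    · have hall : ∀ y, p x y = 0 := by
        intro y
        have h1 := hple x y
        have h2 := hp0 x y
        linarith
      simp [hall]
    · have hpne : (∑ y', p x y') ≠ 0 := ne_of_gt hpx
      have hgibbs := gibbs' (fun y => p x y / ∑ y', p x y') (c z)
        (fun y => div_nonneg (hp0 x y) (hpX0 x))
        (by rw [← Finset.sum_div, div_self hpne])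
        (hc0 z) (hc1 z)
        (fun y hy => by
          have hpxy : 0 < p x y := by
            rcases div_pos_iff.mp hy with ⟨h1, _⟩ | ⟨_, h2⟩
            · exact h1
            · linarith
          apply hpos y z
          have hle : p x y * q x z ≤ ∑ x', p x' y * q x' z :=
            Finset.single_le_sum (fun x' _ => mul_nonneg (hp0 x' y) (hq0 x' z))
              (Finset.mem_univ x)
          have := mul_pos hpxy hqz
          linarith)
      calc ∑ y, p x y * q x z * Real.log (c z y)
          = ∑ y, q x z * (∑ y', p x y') * ((p x y / ∑ y', p x y') * Real.log (c z y)) :=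
            Finset.sum_congr rfl fun y _ => by
              rw [mul_comm (p x y) (q x z)]
              exact aux1 _ _ _ _ hpne
        _ = q x z * (∑ y', p x y') *
              ∑ y, (p x y / ∑ y', p x y') * Real.log (c z y) :=
            (Finset.mul_sum _ _ _).symm
        _ ≤ q x z * (∑ y', p x y') *
              ∑ y, (p x y / ∑ y', p x y') * Real.log (p x y / ∑ y', p x y') := by
            apply mul_le_mul_of_nonneg_left hgibbs
            positivity
        _ = ∑ y, q x z * (∑ y', p x y') *
              ((p x y / ∑ y', p x y') * Real.log (p x y / ∑ y', p x y')) :=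
            Finset.mul_sum _ _ _
        _ = ∑ y, q x z * (p x y * Real.log (p x y / ∑ y', p x y')) :=
            Finset.sum_congr rfl fun y _ => aux2 _ _ _ _ hpne
        _ = q x z * ∑ y, p x y * Real.log (p x y / ∑ y', p x y') :=
            (Finset.mul_sum _ _ _).symm
end

section
/- Let X, Y, Z be nonempty finite types, let p be a pmf on X × Y, and let q be a kernel from X to Z. Define the pmf r on X × Y × Z by r(x,y,z) = p(x,y)·q(z|x), and let r_{YZ} denote its (Y,Z)-marginal. Then I_{r_{YZ}}(Y;Z) ≤ I_p(X;Y); that is, the mutual information between the label Y and the encoding Z produced by the channel q from X never exceeds the mutual information between X and Y. -/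
/-- **Data-processing inequality.**  For the joint `r x y z = p x y * q x z`,
the mutual information between `Y` and the encoding `Z` (computed from the
`(Y,Z)`-marginal `rYZ y z = ∑ x, p x y * q x z`) never exceeds `I_p(X;Y)`. -/
theorem mi_yz_le_mi_xy {X Y Z : Type*}
    [Fintype X] [Fintype Y] [Fintype Z] [Nonempty X] [Nonempty Y] [Nonempty Z]
    (p : X → Y → ℝ) (hp0 : ∀ x y, 0 ≤ p x y) (hp1 : ∑ x, ∑ y, p x y = 1)
    (q : X → Z → ℝ) (hq0 : ∀ x z, 0 ≤ q x z) (hq1 : ∀ x, ∑ z, q x z = 1)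
    (r : X → Y → Z → ℝ) (hr : ∀ x y z, r x y z = p x y * q x z)
    (rYZ : Y → Z → ℝ) (hrYZ : ∀ y z, rYZ y z = ∑ x, r x y z) :
    ∑ y, ∑ z, rYZ y z *
        Real.log (rYZ y z / ((∑ z', rYZ y z') * (∑ y', rYZ y' z)))
      ≤ ∑ x, ∑ y, p x y * Real.log (p x y / ((∑ y', p x y') * (∑ x', p x' y))) := by
  classical
  have hr0 : ∀ x y z, 0 ≤ r x y z := fun x y z => by
    rw [hr]; exact mul_nonneg (hp0 x y) (hq0 x z)
  have hrYZ0 : ∀ y z, 0 ≤ rYZ y z := fun y z => by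
    rw [hrYZ]; exact Finset.sum_nonneg fun x _ => hr0 x y z
  have hrZ0 : ∀ z, 0 ≤ ∑ y', rYZ y' z := fun z =>
    Finset.sum_nonneg fun y _ => hrYZ0 y z
  have hpX0 : ∀ x, 0 ≤ ∑ y', p x y' := fun x =>
    Finset.sum_nonneg fun y _ => hp0 x y
  -- the Y-marginal of rYZ equals the Y-marginal of p
  have hA : ∀ y, (∑ z', rYZ y z') = ∑ x', p x' y := by
    intro y
    simp only [hrYZ, hr]
    rw [Finset.sum_comm]
    simp only [← Finset.mul_sum, hq1, mul_one]
  -- the Z-marginal identity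
  have hqpX : ∀ z, ∑ x, q x z * (∑ y', p x y') = ∑ y', rYZ y' z := by
    intro z
    simp only [hrYZ, hr]
    rw [Finset.sum_comm]
    refine Finset.sum_congr rfl fun x _ => ?_
    rw [← Finset.sum_mul, mul_comm]
  -- the Z-marginal sums to 1
  have hsum_rZ : ∑ z, ∑ y', rYZ y' z = 1 := by
    rw [Finset.sum_comm]
    simp only [hA]
    rw [Finset.sum_comm]
    exact hp1
  -- total mass of r is 1
  have hsum_r : ∑ x, ∑ y, ∑ z, r x y z = 1 := by
    simp only [hr, ← Finset.mul_sum, hq1, mul_one]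
    exact hp1
  simp only [hA]
  -- rewrite LHS as a triple sum over x, y, z
  have hL : ∑ y, ∑ z, rYZ y z *
      Real.log (rYZ y z / ((∑ x', p x' y) * (∑ y', rYZ y' z)))
      = ∑ x, ∑ y, ∑ z, r x y z *
        Real.log (rYZ y z / ((∑ x', p x' y) * (∑ y', rYZ y' z))) := by
    have h1 : ∑ y, ∑ z, rYZ y z *
        Real.log (rYZ y z / ((∑ x', p x' y) * (∑ y', rYZ y' z)))
        = ∑ y, ∑ z, ∑ x, r x y z *
          Real.log (rYZ y z / ((∑ x', p x' y) * (∑ y', rYZ y' z))) := by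
      refine Finset.sum_congr rfl fun y _ => Finset.sum_congr rfl fun z _ => ?_
      rw [hrYZ, Finset.sum_mul]
    rw [h1]
    exact (Finset.sum_congr rfl fun y _ => Finset.sum_comm).trans Finset.sum_comm
  -- rewrite RHS as a triple sum over x, y, z
  have hR : ∑ x, ∑ y, p x y * Real.log (p x y / ((∑ y', p x y') * (∑ x', p x' y)))
      = ∑ x, ∑ y, ∑ z, r x y z *
        Real.log (p x y / ((∑ y', p x y') * (∑ x', p x' y))) := by
    refine Finset.sum_congr rfl fun x _ => Finset.sum_congr rfl fun y _ => ?_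
    have hsz : ∑ z, r x y z = p x y := by
      simp only [hr, ← Finset.mul_sum, hq1, mul_one]
    rw [← hsz, Finset.sum_mul]
  rw [hL, hR]
  -- termwise key inequality
  have key : ∀ x y z,
      r x y z - q x z * (∑ y', p x y') * (rYZ y z / ∑ y', rYZ y' z)
      ≤ r x y z * Real.log (p x y / ((∑ y', p x y') * (∑ x', p x' y)))
        - r x y z * Real.log (rYZ y z / ((∑ x', p x' y) * (∑ y', rYZ y' z))) := by
    intro x y z
    by_cases h0 : r x y z = 0
    · have hg : 0 ≤ q x z * (∑ y', p x y') * (rYZ y z / ∑ y', rYZ y' z) :=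
        mul_nonneg (mul_nonneg (hq0 x z) (hpX0 x))
          (div_nonneg (hrYZ0 y z) (hrZ0 z))
      rw [h0, zero_mul, zero_mul]
      linarith
    · have hrpos : 0 < r x y z := lt_of_le_of_ne (hr0 x y z) (Ne.symm h0)
      have hppos : 0 < p x y := by
        rcases (hp0 x y).lt_or_eq with h | h
        · exact h
        · exact absurd (by rw [hr, ← h, zero_mul]) h0
      have hqpos : 0 < q x z := by
        rcases (hq0 x z).lt_or_eq with h | h
        · exact h
        · exact absurd (by rw [hr, ← h, mul_zero]) h0
      have hpXpos : 0 < ∑ y', p x y' :=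
        lt_of_lt_of_le hppos (Finset.single_le_sum (fun y' _ => hp0 x y') (Finset.mem_univ y))
      have hpYpos : 0 < ∑ x', p x' y :=
        lt_of_lt_of_le hppos
          (Finset.single_le_sum (f := fun x' => p x' y) (fun x' _ => hp0 x' y) (Finset.mem_univ x))
      have hrYZpos : 0 < rYZ y z := by
        rw [hrYZ]
        exact lt_of_lt_of_le hrpos
          (Finset.single_le_sum (f := fun x' => r x' y z) (fun x' _ => hr0 x' y z)
            (Finset.mem_univ x))
      have hrZpos : 0 < ∑ y', rYZ y' z :=
        lt_of_lt_of_le hrYZpos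
          (Finset.single_le_sum (f := fun y' => rYZ y' z) (fun y' _ => hrYZ0 y' z)
            (Finset.mem_univ y))
      set t : ℝ := p x y * (∑ y', rYZ y' z) / ((∑ y', p x y') * rYZ y z) with ht
      have htpos : 0 < t := by rw [ht]; positivity
      have hlogdiff :
          Real.log (p x y / ((∑ y', p x y') * (∑ x', p x' y)))
            - Real.log (rYZ y z / ((∑ x', p x' y) * (∑ y', rYZ y' z)))
          = Real.log t := by
        rw [show t = (p x y / ((∑ y', p x y') * (∑ x', p x' y)))
              / (rYZ y z / ((∑ x', p x' y) * (∑ y', rYZ y' z))) by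
            rw [ht]; field_simp]
        exact (Real.log_div (by positivity) (by positivity)).symm
      have hlb : 1 - 1 / t ≤ Real.log t := by
        have h := Real.log_le_sub_one_of_pos (show (0:ℝ) < 1 / t by positivity)
        rw [Real.log_div one_ne_zero (ne_of_gt htpos), Real.log_one, zero_sub] at h
        linarith
      have hgt : r x y z / t = q x z * (∑ y', p x y') * (rYZ y z / ∑ y', rYZ y' z) := by
        rw [ht, hr]
        field_simp
      calc r x y z - q x z * (∑ y', p x y') * (rYZ y z / ∑ y', rYZ y' z)
          = r x y z * (1 - 1 / t) := by rw [← hgt]; ring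
        _ ≤ r x y z * Real.log t := mul_le_mul_of_nonneg_left hlb (hr0 x y z)
        _ = _ := by rw [← hlogdiff, mul_sub]
  -- sum of the correction term is at most 1
  have hsum_g : ∑ x, ∑ y, ∑ z, q x z * (∑ y', p x y') * (rYZ y z / ∑ y', rYZ y' z) ≤ 1 := by
    have hswap : ∑ x, ∑ y, ∑ z, q x z * (∑ y', p x y') * (rYZ y z / ∑ y', rYZ y' z)
        = ∑ z, ∑ x, ∑ y, q x z * (∑ y', p x y') * (rYZ y z / ∑ y', rYZ y' z) :=
      (Finset.sum_congr rfl fun x _ => Finset.sum_comm).trans Finset.sum_comm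
    rw [hswap, ← hsum_rZ]
    refine Finset.sum_le_sum fun z _ => ?_
    have hin : ∀ x, ∑ y, q x z * (∑ y', p x y') * (rYZ y z / ∑ y', rYZ y' z)
        = q x z * (∑ y', p x y') * ((∑ y', rYZ y' z) / ∑ y', rYZ y' z) := by
      intro x
      rw [← Finset.mul_sum, ← Finset.sum_div]
    simp only [hin]
    have hdd : (∑ y', rYZ y' z) / (∑ y', rYZ y' z) ≤ 1 := by
      rcases eq_or_ne (∑ y', rYZ y' z) 0 with h | h
      · rw [h]; norm_num
      · rw [div_self h]
    calc ∑ x, q x z * (∑ y', p x y') * ((∑ y', rYZ y' z) / ∑ y', rYZ y' z)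
        ≤ ∑ x, q x z * (∑ y', p x y') := by
          refine Finset.sum_le_sum fun x _ => ?_
          exact mul_le_of_le_one_right (mul_nonneg (hq0 x z) (hpX0 x)) hdd
      _ = ∑ y', rYZ y' z := hqpX z
  -- put everything together
  have hsum_key : ∑ x, ∑ y, ∑ z,
      (r x y z - q x z * (∑ y', p x y') * (rYZ y z / ∑ y', rYZ y' z))
      ≤ ∑ x, ∑ y, ∑ z,
        (r x y z * Real.log (p x y / ((∑ y', p x y') * (∑ x', p x' y)))
          - r x y z * Real.log (rYZ y z / ((∑ x', p x' y) * (∑ y', rYZ y' z)))) :=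
    Finset.sum_le_sum fun x _ => Finset.sum_le_sum fun y _ =>
      Finset.sum_le_sum fun z _ => key x y z
  simp only [Finset.sum_sub_distrib] at hsum_key
  linarith [hsum_key, hsum_r, hsum_g]
end

section
/- (Upper bound of the ELBO, Lemma 4.1.) Let X, Y, U, B, Z be nonempty finite types. Let p be a pmf on X × Y with marginals p_X and p_Y. Let p_L be a strictly positive pmf on U × B × Z, let a be a kernel from U × B × Z to X with a(x|u,β,z) > 0 everywhere, let c be a kernel from Z to Y with c(y|z) > 0 everywhere, and let q be a kernel from X to U × B × Z with Z-marginal q_z(z|x) = ∑_{u,β} q(u,β,z|x). Define ELBO(x,y) = ∑_{u,β,z} q(u,β,z|x)·( log( p_L(u,β,z)·a(x|u,β,z)·c(y|z) ) − log q(u,β,z|x) ), the pmf r on X × Y × Z by r(x,y,z) = p(x,y)·q_z(z|x) with (Y,Z)-marginal r_{YZ}, and the pmf s on X × (U × B × Z) by s(x,u,β,z) = p_X(x)·q(u,β,z|x). Then ∑_{x,y} p(x,y)·ELBO(x,y) ≤ I_{r_{YZ}}(Y;Z) + I_s(X;(U,B,Z)) − H(p_Y) − H(p_X). -/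
/-!
With `s = p_X q` and `r_{YZ}` the joint laws produced by the encoder, the expected ELBO splits as
`E_s[log (p_L a) - log q] + E_r[log c]`. By Gibbs' inequality against `c(y|z) r_Z(z)`, the second
term is at most `-H(Y|Z) = I(Y;Z) - H(Y)`. By the chain rule `E_s[log q] = -H(s) + H(p_X)` and Gibbs'
inequality against the pmf `p_L a`, the first is at most `-H(p_X) ≤ I_s(X;(U,B,Z)) - H(p_X)`.
-/

open Finset Real

section

variable {ι α β : Type*} [Fintype ι] [Fintype α] [Fintype β]

theorem mul_log_sub_log_le_sub {w v : ℝ} (hw : 0 ≤ w) (hv : 0 ≤ v) (hwv : w ≠ 0 → 0 < v) :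
    w * (log v - log w) ≤ v - w := by
  rcases hw.eq_or_lt with rfl | hw
  · simpa using hv
  have hv := hwv hw.ne'
  calc w * (log v - log w) = w * log (v / w) := by rw [log_div hv.ne' hw.ne']
    _ ≤ w * (v / w - 1) := by gcongr; exact log_le_sub_one_of_pos (div_pos hv hw)
    _ = v - w := by field_simp

theorem sum_mul_log_le_sum_mul_log {w v : ι → ℝ} (hw : ∀ i, 0 ≤ w i) (hv : ∀ i, 0 ≤ v i)
    (hwv : ∀ i, w i ≠ 0 → 0 < v i) (hsum : ∑ i, v i ≤ ∑ i, w i) :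
    ∑ i, w i * log (v i) ≤ ∑ i, w i * log (w i) := by
  have := sum_le_sum (s := univ) fun i _ => mul_log_sub_log_le_sub (hw i) (hv i) (hwv i)
  simp only [mul_sub, sum_sub_distrib] at this
  linarith

theorem sum_sum_mul_log_le_sum_sum_mul_log {w v : α → β → ℝ} (hw : ∀ a b, 0 ≤ w a b)
    (hv : ∀ a b, 0 ≤ v a b) (hwv : ∀ a b, w a b ≠ 0 → 0 < v a b)
    (hsum : ∑ a, ∑ b, v a b ≤ ∑ a, ∑ b, w a b) :
    ∑ a, ∑ b, w a b * log (v a b) ≤ ∑ a, ∑ b, w a b * log (w a b) := by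
  simp only [← Fintype.sum_prod_type'] at hsum ⊢
  exact sum_mul_log_le_sum_mul_log (fun _ => hw _ _) (fun _ => hv _ _) (fun _ => hwv _ _) hsum

theorem sum_pos_of_ne_zero {f : ι → ℝ} (hf : ∀ i, 0 ≤ f i) {i : ι} (hi : f i ≠ 0) :
    0 < ∑ j, f j :=
  sum_pos' (fun j _ => hf j) ⟨i, mem_univ i, (hf i).lt_of_ne' hi⟩

noncomputable def mutualInfo (r : α → β → ℝ) : ℝ :=
  ∑ a, ∑ b, r a b * log (r a b / ((∑ b', r a b') * ∑ a', r a' b))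

theorem sum_sum_mul_log_mul_marginals {r : α → β → ℝ} (hr : ∀ a b, 0 ≤ r a b) :
    ∑ a, ∑ b, r a b * log ((∑ b', r a b') * ∑ a', r a' b)
      = ∑ a, (∑ b, r a b) * log (∑ b, r a b) + ∑ b, (∑ a, r a b) * log (∑ a, r a b) := by
  have split : ∀ a b, r a b * log ((∑ b', r a b') * ∑ a', r a' b)
      = r a b * log (∑ b', r a b') + r a b * log (∑ a', r a' b) := by
    intro a b
    rcases eq_or_ne (r a b) 0 with h | h
    · simp [h]
    rw [log_mul (sum_pos_of_ne_zero (hr a) h).ne' (sum_pos_of_ne_zero (hr · b) h).ne', mul_add]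
  simp only [split, sum_add_distrib, ← sum_mul]
  rw [sum_comm (f := fun a b => r a b * log (∑ a', r a' b))]
  simp only [← sum_mul]

theorem mutualInfo_eq_sub {r : α → β → ℝ} (hr : ∀ a b, 0 ≤ r a b) :
    mutualInfo r = ∑ a, ∑ b, r a b * log (r a b)
      - ∑ a, ∑ b, r a b * log ((∑ b', r a b') * ∑ a', r a' b) := by
  simp only [mutualInfo, ← sum_sub_distrib, ← mul_sub]
  refine sum_congr rfl fun a _ => sum_congr rfl fun b _ => ?_
  rcases eq_or_ne (r a b) 0 with h | h
  · simp [h]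
  rw [log_div h (mul_pos (sum_pos_of_ne_zero (hr a) h) (sum_pos_of_ne_zero (hr · b) h)).ne']

theorem mutualInfo_add_sum_mul_log_marginal {r : α → β → ℝ}
    (hr : ∀ a b, 0 ≤ r a b) :
    mutualInfo r + ∑ a, (∑ b, r a b) * log (∑ b, r a b)
      = ∑ a, ∑ b, r a b * log (r a b) - ∑ b, (∑ a, r a b) * log (∑ a, r a b) := by
  rw [mutualInfo_eq_sub hr, sum_sum_mul_log_mul_marginals hr]
  ring

theorem mutualInfo_nonneg {r : α → β → ℝ} (hr : ∀ a b, 0 ≤ r a b) (hr1 : ∑ a, ∑ b, r a b = 1) :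
    0 ≤ mutualInfo r := by
  have hcol : ∑ b, ∑ a, r a b = 1 := by rw [sum_comm]; exact hr1
  have hmass : ∑ a, ∑ b, (∑ b', r a b') * ∑ a', r a' b = ∑ a, ∑ b, r a b := by
    rw [← sum_mul_sum, hcol, mul_one]
  have := sum_sum_mul_log_le_sum_sum_mul_log hr
    (fun a b => mul_nonneg (sum_nonneg fun b' _ => hr a b') (sum_nonneg fun a' _ => hr a' b))
    (fun a b h => mul_pos (sum_pos_of_ne_zero (hr a) h) (sum_pos_of_ne_zero (hr · b) h))
    hmass.le
  rw [mutualInfo_eq_sub hr]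
  linarith

theorem sum_sum_mul_log_kernel_le {r : α → β → ℝ} (hr : ∀ a b, 0 ≤ r a b) {c : β → α → ℝ}
    (hc : ∀ b a, 0 < c b a) (hc1 : ∀ b, ∑ a, c b a = 1) :
    ∑ a, ∑ b, r a b * log (c b a)
      ≤ mutualInfo r + ∑ a, (∑ b, r a b) * log (∑ b, r a b) := by
  have hmass : ∑ a, ∑ b, c b a * ∑ a', r a' b = ∑ a, ∑ b, r a b := by
    rw [sum_comm]
    simp only [← sum_mul, hc1, one_mul]
    exact sum_comm
  have split : ∀ a b, r a b * log (c b a * ∑ a', r a' b)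
      = r a b * log (c b a) + r a b * log (∑ a', r a' b) := by
    intro a b
    rcases eq_or_ne (r a b) 0 with h | h
    · simp [h]
    rw [log_mul (hc b a).ne' (sum_pos_of_ne_zero (hr · b) h).ne', mul_add]
  have gibbs := sum_sum_mul_log_le_sum_sum_mul_log hr
    (fun a b => mul_nonneg (hc b a).le (sum_nonneg fun a' _ => hr a' b))
    (fun a b h => mul_pos (hc b a) (sum_pos_of_ne_zero (hr · b) h)) hmass.le
  have hcol : ∑ a, ∑ b, r a b * log (∑ a', r a' b) = ∑ b, (∑ a, r a b) * log (∑ a, r a b) := by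
    rw [sum_comm]
    simp only [sum_mul]
  simp only [split, sum_add_distrib, hcol] at gibbs
  rw [mutualInfo_add_sum_mul_log_marginal hr]
  linarith

theorem sum_sum_mul_log_joint {m : α → ℝ} {k s : α → β → ℝ} (hk1 : ∀ a, ∑ b, k a b = 1)
    (hs : ∀ a b, s a b = m a * k a b) :
    ∑ a, ∑ b, s a b * log (s a b) = ∑ a, m a * log (m a) + ∑ a, ∑ b, s a b * log (k a b) := by
  have split : ∀ a b, s a b * log (s a b) = m a * k a b * log (m a) + s a b * log (k a b) := by
    intro a b
    rcases eq_or_ne (s a b) 0 with h | h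
    · simp [h, ← hs]
    rw [hs] at h ⊢
    rw [log_mul (left_ne_zero_of_mul h) (right_ne_zero_of_mul h)]
    ring
  simp only [split, sum_add_distrib, ← sum_mul, ← mul_sum, hk1, mul_one]

theorem sum_sum_mul_log_sub_log_kernel_le {m : α → ℝ} (hm : ∀ a, 0 ≤ m a)
    (hm1 : ∑ a, m a = 1) {k s : α → β → ℝ} (hk : ∀ a b, 0 ≤ k a b) (hk1 : ∀ a, ∑ b, k a b = 1)
    (hs : ∀ a b, s a b = m a * k a b) {g : α → β → ℝ} (hg : ∀ a b, 0 < g a b)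
    (hg1 : ∑ a, ∑ b, g a b ≤ 1) :
    ∑ a, ∑ b, s a b * (log (g a b) - log (k a b)) ≤ mutualInfo s + ∑ a, m a * log (m a) := by
  have hs0 : ∀ a b, 0 ≤ s a b := fun a b => hs a b ▸ mul_nonneg (hm a) (hk a b)
  have hs1 : ∑ a, ∑ b, s a b = 1 := by simp only [hs, ← mul_sum, hk1, mul_one, hm1]
  have gibbs := sum_sum_mul_log_le_sum_sum_mul_log hs0 (fun a b => (hg a b).le)
    (fun a b _ => hg a b) (hs1 ▸ hg1)
  have chain := sum_sum_mul_log_joint hk1 hs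
  have := mutualInfo_nonneg hs0 hs1
  simp only [mul_sub, sum_sub_distrib]
  linarith

end

theorem sum_sum_sum_mul_eq_sum_marginal_mul {U B Z : Type*} [Fintype U] [Fintype B] [Fintype Z]
    (q : U → B → Z → ℝ) (g : Z → ℝ) :
    ∑ u, ∑ β, ∑ z, q u β z * g z = ∑ z, (∑ u, ∑ β, q u β z) * g z := by
  simp only [sum_mul]
  exact (sum_congr rfl fun u _ => sum_comm).trans sum_comm

theorem sum_mul_elbo_eq {X Y U B Z : Type*} [Fintype X] [Fintype Y] [Fintype U] [Fintype B]
    [Fintype Z] (p : X → Y → ℝ) {pL : U → B → Z → ℝ} (hpL0 : ∀ u β z, 0 < pL u β z)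
    {a : U → B → Z → X → ℝ} (ha0 : ∀ u β z x, 0 < a u β z x) {c : Z → Y → ℝ}
    (hc0 : ∀ z y, 0 < c z y) (q : X → U → B → Z → ℝ) {qz : X → Z → ℝ}
    (hqz : ∀ x z, qz x z = ∑ u, ∑ β, q x u β z) {rYZ : Y → Z → ℝ}
    (hrYZ : ∀ y z, rYZ y z = ∑ x, p x y * qz x z) {s : X → U → B → Z → ℝ}
    (hs : ∀ x u β z, s x u β z = (∑ y, p x y) * q x u β z) :
    ∑ x, ∑ y, p x y * ∑ u, ∑ β, ∑ z, q x u β z *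
        (log (pL u β z * a u β z x * c z y) - log (q x u β z))
      = ∑ x, ∑ u, ∑ β, ∑ z, s x u β z * (log (pL u β z * a u β z x) - log (q x u β z))
        + ∑ y, ∑ z, rYZ y z * log (c z y) := by
  have split : ∀ x y u β z, q x u β z * (log (pL u β z * a u β z x * c z y) - log (q x u β z))
      = q x u β z * (log (pL u β z * a u β z x) - log (q x u β z)) + q x u β z * log (c z y) := by
    intro x y u β z
    rw [log_mul (mul_pos (hpL0 u β z) (ha0 u β z x)).ne' (hc0 z y).ne']
    ring
  simp only [split, sum_add_distrib, sum_sum_sum_mul_eq_sum_marginal_mul (q _), ← hqz, mul_add]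
  congr 1
  · refine sum_congr rfl fun x _ => ?_
    rw [← sum_mul]
    simp only [mul_sum, hs, mul_assoc]
  · simp only [hrYZ, mul_sum, sum_mul, mul_assoc]
    exact sum_comm.trans (sum_congr rfl fun y _ => sum_comm)

theorem elbo_upper_bound_general {X Y U B Z : Type*}
    [Fintype X] [Fintype Y] [Fintype U] [Fintype B] [Fintype Z]
    (p : X → Y → ℝ) (hp0 : ∀ x y, 0 ≤ p x y) (hp1 : ∑ x, ∑ y, p x y = 1)
    (pL : U → B → Z → ℝ) (hpL0 : ∀ u β z, 0 < pL u β z)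
    (hpL1 : ∑ u, ∑ β, ∑ z, pL u β z = 1)
    (a : U → B → Z → X → ℝ) (ha0 : ∀ u β z x, 0 < a u β z x)
    (ha1 : ∀ u β z, ∑ x, a u β z x = 1)
    (c : Z → Y → ℝ) (hc0 : ∀ z y, 0 < c z y) (hc1 : ∀ z, ∑ y, c z y = 1)
    (q : X → U → B → Z → ℝ) (hq0 : ∀ x u β z, 0 ≤ q x u β z)
    (hq1 : ∀ x, ∑ u, ∑ β, ∑ z, q x u β z = 1)
    (qz : X → Z → ℝ) (hqz : ∀ x z, qz x z = ∑ u, ∑ β, q x u β z)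
    (ELBO : X → Y → ℝ)
    (hELBO : ∀ x y, ELBO x y = ∑ u, ∑ β, ∑ z, q x u β z *
        (Real.log (pL u β z * a u β z x * c z y) - Real.log (q x u β z)))
    (rYZ : Y → Z → ℝ) (hrYZ : ∀ y z, rYZ y z = ∑ x, p x y * qz x z)
    (s : X → U → B → Z → ℝ)
    (hs : ∀ x u β z, s x u β z = (∑ y, p x y) * q x u β z) :
    ∑ x, ∑ y, p x y * ELBO x y
      ≤ (∑ y, ∑ z, rYZ y z *
            Real.log (rYZ y z / ((∑ z', rYZ y z') * (∑ y', rYZ y' z))))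
        + (∑ x, ∑ u, ∑ β, ∑ z, s x u β z *
            Real.log (s x u β z /
              ((∑ u', ∑ β', ∑ z', s x u' β' z') * (∑ x', s x' u β z))))
        - (-∑ y, (∑ x, p x y) * Real.log (∑ x, p x y))
        - (-∑ x, (∑ y, p x y) * Real.log (∑ y, p x y)) := by
  have hqz1 : ∀ x, ∑ z, qz x z = 1 := fun x => by
    simpa only [mul_one, ← hqz, hq1] using
      (sum_sum_sum_mul_eq_sum_marginal_mul (q x) fun _ => 1).symm
  have hrY : ∀ y, ∑ z, rYZ y z = ∑ x, p x y := fun y => by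
    simp only [hrYZ]
    rw [sum_comm]
    simp only [← mul_sum, hqz1, mul_one]
  have hrYZ0 : ∀ y z, 0 ≤ rYZ y z := fun y z => hrYZ y z ▸
    sum_nonneg fun x _ => mul_nonneg (hp0 x y) (hqz x z ▸ sum_nonneg fun u _ =>
      sum_nonneg fun β _ => hq0 x u β z)
  have hmodel : ∑ x, ∑ w : U × B × Z, pL w.1 w.2.1 w.2.2 * a w.1 w.2.1 w.2.2 x ≤ 1 := by
    rw [sum_comm]
    simp only [Fintype.sum_prod_type, ← mul_sum, ha1, mul_one, hpL1, le_refl]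
  have hX := sum_sum_mul_log_sub_log_kernel_le (fun x => sum_nonneg fun y _ => hp0 x y) hp1
    (k := fun x w => q x w.1 w.2.1 w.2.2) (fun _ _ => hq0 _ _ _ _)
    (by simpa only [Fintype.sum_prod_type] using hq1) (fun _ _ => hs _ _ _ _)
    (fun _ _ => mul_pos (hpL0 _ _ _) (ha0 _ _ _ _)) hmodel
  have hY := sum_sum_mul_log_kernel_le hrYZ0 hc0 hc1
  simp only [hrY] at hY
  simp only [mutualInfo, Fintype.sum_prod_type] at hX hY
  simp only [hELBO, sum_mul_elbo_eq p hpL0 ha0 hc0 q hqz hrYZ hs]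
  linarith

/-- **Upper bound of the ELBO (Lemma 4.1).**  The expected ELBO is at most
`I_{r_YZ}(Y;Z) + I_s(X;(U,B,Z)) - H(p_Y) - H(p_X)`, where
`r x y z = p x y * q_z z|x` and `s x u β z = p_X x * q u β z|x`. -/
theorem elbo_upper_bound {X Y U B Z : Type*}
    [Fintype X] [Fintype Y] [Fintype U] [Fintype B] [Fintype Z]
    [Nonempty X] [Nonempty Y] [Nonempty U] [Nonempty B] [Nonempty Z]
    (p : X → Y → ℝ) (hp0 : ∀ x y, 0 ≤ p x y) (hp1 : ∑ x, ∑ y, p x y = 1)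
    (pL : U → B → Z → ℝ) (hpL0 : ∀ u β z, 0 < pL u β z)
    (hpL1 : ∑ u, ∑ β, ∑ z, pL u β z = 1)
    (a : U → B → Z → X → ℝ) (ha0 : ∀ u β z x, 0 < a u β z x)
    (ha1 : ∀ u β z, ∑ x, a u β z x = 1)
    (c : Z → Y → ℝ) (hc0 : ∀ z y, 0 < c z y) (hc1 : ∀ z, ∑ y, c z y = 1)
    (q : X → U → B → Z → ℝ) (hq0 : ∀ x u β z, 0 ≤ q x u β z)
    (hq1 : ∀ x, ∑ u, ∑ β, ∑ z, q x u β z = 1)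
    (qz : X → Z → ℝ) (hqz : ∀ x z, qz x z = ∑ u, ∑ β, q x u β z)
    (ELBO : X → Y → ℝ)
    (hELBO : ∀ x y, ELBO x y = ∑ u, ∑ β, ∑ z, q x u β z *
        (Real.log (pL u β z * a u β z x * c z y) - Real.log (q x u β z)))
    (rYZ : Y → Z → ℝ) (hrYZ : ∀ y z, rYZ y z = ∑ x, p x y * qz x z)
    (s : X → U → B → Z → ℝ)
    (hs : ∀ x u β z, s x u β z = (∑ y, p x y) * q x u β z) :
    ∑ x, ∑ y, p x y * ELBO x y
      ≤ (∑ y, ∑ z, rYZ y z *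
            Real.log (rYZ y z / ((∑ z', rYZ y z') * (∑ y', rYZ y' z))))
        + (∑ x, ∑ u, ∑ β, ∑ z, s x u β z *
            Real.log (s x u β z /
              ((∑ u', ∑ β', ∑ z', s x u' β' z') * (∑ x', s x' u β z))))
        - (-∑ y, (∑ x, p x y) * Real.log (∑ x, p x y))
        - (-∑ x, (∑ y, p x y) * Real.log (∑ y, p x y)) :=
  elbo_upper_bound_general p hp0 hp1 pL hpL0 hpL1 a ha0 ha1 c hc0 hc1 q hq0 hq1 qz hqz ELBO hELBO
    rYZ hrYZ s hs
end

section
/- (Information decomposition of the adversarial loss, Lemma 4.2, first part.) Let K, X, B, Z be nonempty finite types, let p be a pmf on K × X with K-marginal p_K, let f : K → B be a function, and let q be a kernel from X to Z. Define the pmf s on K × X × B × Z by s(k,x,β,z) = p(k,x)·q(z|x) if β = f(k) and 0 otherwise, and let s_{KZ} denote its (K,Z)-marginal. Then the supremum, over all kernels D from Z to K with D(k|z) > 0 whenever s_{KZ}(k,z) > 0, of ∑_{k,z} s_{KZ}(k,z) log D(k|z) equals I_s(Z;B) + I_s(Z;K|B) − H(p_K), where the mutual information terms are computed from the corresponding marginals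 of s; the supremum is attained at the posterior D(k|z) = s_{KZ}(k,z)/(∑_{k'} s_{KZ}(k',z)). -/
/-!
Since `B = f K` is a function of `K`, the chain rule collapses `I(Z;B) + I(Z;K|B)` to `I(Z;K)`,
and `I(Z;K) - H(K) = -H(K|Z)` is the expected log-posterior `∑ s_KZ log (s_KZ / s_Z)`.
Gibbs' inequality, applied to each column `z` separately, shows that no kernel `D` beats the
posterior, which attains the value.
-/

/-- Mutual information `I_s(Z;B)` between the encoding `Z` and the domain index `B`,
computed from the corresponding marginals of a joint `s` on `K × X × B × Z`. -/
noncomputable def IZB {K X B Z : Type*} [Fintype K] [Fintype X] [Fintype B] [Fintype Z]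
    (s : K → X → B → Z → ℝ) : ℝ :=
  ∑ β, ∑ z, (∑ k, ∑ x, s k x β z) *
    Real.log ((∑ k, ∑ x, s k x β z) /
      ((∑ k, ∑ x, ∑ z', s k x β z') * (∑ k, ∑ x, ∑ β', s k x β' z)))

/-- Conditional mutual information `I_s(Z;K|B)`, computed from the corresponding
marginals of a joint `s` on `K × X × B × Z`. -/
noncomputable def IZKgB {K X B Z : Type*} [Fintype K] [Fintype X] [Fintype B] [Fintype Z]
    (s : K → X → B → Z → ℝ) : ℝ :=
  ∑ k, ∑ β, ∑ z, (∑ x, s k x β z) *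
    Real.log (((∑ x, s k x β z) * (∑ k', ∑ x, ∑ z', s k' x β z')) /
      ((∑ k', ∑ x, s k' x β z) * (∑ x, ∑ z', s k x β z')))

open Finset Real

theorem mul_log_le_mul_log_div_add {w d S : ℝ} (hw : 0 ≤ w) (hd : 0 ≤ d) (hS : 0 ≤ S)
    (hpos : 0 < w → 0 < d ∧ 0 < S) :
    w * log d ≤ w * log (w / S) + (d * S - w) := by
  rcases hw.eq_or_lt with rfl | hw
  · simpa using mul_nonneg hd hS
  obtain ⟨hd, hS⟩ := hpos hw
  -- `log x ≤ x - 1` at `x = d S / w`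
  have key := mul_le_mul_of_nonneg_left (log_le_sub_one_of_pos (by positivity : 0 < d * S / w))
    hw.le
  rw [log_div (by positivity) hw.ne', log_mul hd.ne' hS.ne'] at key
  rw [log_div hw.ne' hS.ne']
  field_simp at key ⊢
  linarith

theorem sum_mul_log_le_sum_mul_log_div_sum {ι : Type*} [Fintype ι] {w d : ι → ℝ}
    (hw : ∀ i, 0 ≤ w i) (hd : ∀ i, 0 ≤ d i) (hd1 : ∑ i, d i = 1)
    (hpos : ∀ i, 0 < w i → 0 < d i) :
    ∑ i, w i * log (d i) ≤ ∑ i, w i * log (w i / ∑ j, w j) := by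
  set S := ∑ j, w j
  have hw_le : ∀ i, w i ≤ S := fun i => single_le_sum (fun j _ => hw j) (mem_univ i)
  calc ∑ i, w i * log (d i) ≤ ∑ i, (w i * log (w i / S) + (d i * S - w i)) :=
        sum_le_sum fun i _ => mul_log_le_mul_log_div_add (hw i) (hd i) ((hw i).trans (hw_le i))
          fun h => ⟨hpos i h, h.trans_le (hw_le i)⟩
    _ = ∑ i, w i * log (w i / S) := by
        rw [sum_add_distrib, sum_sub_distrib, ← sum_mul, hd1, one_mul, sub_self, add_zero]

section Posterior

variable {K Z : Type*} [Fintype K] [Fintype Z] {w : K → Z → ℝ}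

theorem sum_sum_mul_log_le_sum_sum_mul_log_posterior (hw : ∀ k z, 0 ≤ w k z)
    {D : Z → K → ℝ} (hD0 : ∀ z k, 0 ≤ D z k) (hD1 : ∀ z, ∑ k, D z k = 1)
    (hDpos : ∀ k z, 0 < w k z → 0 < D z k) :
    ∑ k, ∑ z, w k z * log (D z k) ≤ ∑ k, ∑ z, w k z * log (w k z / ∑ k', w k' z) := by
  refine sum_comm.trans_le ((sum_le_sum fun z _ => ?_).trans_eq sum_comm)
  exact sum_mul_log_le_sum_mul_log_div_sum (fun k => hw k z) (hD0 z) (hD1 z) fun k => hDpos k z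

theorem sum_sum_mul_log_eq_of_eq_posterior (hw : ∀ k z, 0 ≤ w k z) {D : Z → K → ℝ}
    (hD : ∀ z k, 0 < ∑ k', w k' z → D z k = w k z / ∑ k', w k' z) :
    ∑ k, ∑ z, w k z * log (D z k) = ∑ k, ∑ z, w k z * log (w k z / ∑ k', w k' z) := by
  refine sum_congr rfl fun k _ => sum_congr rfl fun z _ => ?_
  rcases (hw k z).eq_or_lt with h | h
  · rw [← h, zero_mul, zero_mul]
  · rw [hD z k (h.trans_le (single_le_sum (fun k' _ => hw k' z) (mem_univ k)))]

theorem isGreatest_sum_sum_mul_log_posterior [Nonempty K] (hw : ∀ k z, 0 ≤ w k z) :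
    IsGreatest
      {v : ℝ | ∃ D : Z → K → ℝ, (∀ z k, 0 ≤ D z k) ∧ (∀ z, ∑ k, D z k = 1) ∧
        (∀ k z, 0 < w k z → 0 < D z k) ∧ v = ∑ k, ∑ z, w k z * log (D z k)}
      (∑ k, ∑ z, w k z * log (w k z / ∑ k', w k' z)) := by
  have hw_le : ∀ k z, w k z ≤ ∑ k', w k' z := fun k z =>
    single_le_sum (fun k' _ => hw k' z) (mem_univ k)
  -- off the support of `w` any kernel will do; we take the uniform one
  let D : Z → K → ℝ := fun z k =>
    if 0 < ∑ k', w k' z then w k z / ∑ k', w k' z else (Fintype.card K : ℝ)⁻¹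
  refine ⟨⟨D, fun z k => ?_, fun z => ?_, fun k z hkz => ?_, ?_⟩, ?_⟩
  · dsimp only [D]
    split_ifs with h
    exacts [div_nonneg (hw k z) h.le, by positivity]
  · dsimp only [D]
    split_ifs with h
    · rw [← sum_div, div_self h.ne']
    · simp
  · simp only [D, if_pos (hkz.trans_le (hw_le k z))]
    exact div_pos hkz (hkz.trans_le (hw_le k z))
  · exact (sum_sum_mul_log_eq_of_eq_posterior hw fun z k h => if_pos h).symm
  · rintro v ⟨D, hD0, hD1, hDpos, rfl⟩
    exact sum_sum_mul_log_le_sum_sum_mul_log_posterior hw hD0 hD1 hDpos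

end Posterior

/-- The chain rule at a single atom `(k, z)`, with `a = s_BZ`, `b = s_B`, `c = s_Z`, `d = s_K`. -/
theorem log_div_mul_add_log_mul_div_add_log {v a b c d : ℝ} (hv : v ≠ 0) (ha : a ≠ 0)
    (hb : b ≠ 0) (hc : c ≠ 0) (hd : d ≠ 0) :
    log (a / (b * c)) + log (v * b / (a * d)) + log d = log (v / c) := by
  rw [← log_mul (by positivity) (by positivity), ← log_mul (by positivity) hd]
  congr 1
  field_simp

theorem sum_sum_sum_mul_comm {ι κ τ : Type*} [Fintype ι] [Fintype κ] [Fintype τ]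
    (a : ι → κ → τ → ℝ) (g : κ → τ → ℝ) :
    ∑ j, ∑ l, (∑ i, a i j l) * g j l = ∑ i, ∑ j, ∑ l, a i j l * g j l := by
  simp only [sum_mul]
  exact (sum_congr rfl fun _ _ => sum_comm).trans sum_comm

section Graph

variable {K X B Z : Type*} [Fintype K] [Fintype X] [Fintype B] [Fintype Z]

/-- `B = f K` almost surely under `s`. -/
def SupportedOnGraph (s : K → X → B → Z → ℝ) (f : K → B) : Prop :=
  ∀ k x β z, β ≠ f k → s k x β z = 0

variable {s : K → X → B → Z → ℝ} {f : K → B}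

theorem SupportedOnGraph.sum_sum_sum_mul (h : SupportedOnGraph s f) (g : K → B → Z → ℝ) :
    ∑ k, ∑ β, ∑ z, (∑ x, s k x β z) * g k β z = ∑ k, ∑ z, (∑ x, s k x (f k) z) * g k (f k) z :=
  sum_congr rfl fun k _ => Fintype.sum_eq_single (f k) fun β hβ =>
    sum_eq_zero fun z _ => by simp [h k _ β z hβ]

theorem SupportedOnGraph.IZB_eq (h : SupportedOnGraph s f) :
    IZB s = ∑ k, ∑ z, (∑ x, s k x (f k) z) *
      log ((∑ k', ∑ x, s k' x (f k) z) /
        ((∑ k', ∑ x, ∑ z', s k' x (f k) z') * (∑ k', ∑ x, ∑ β, s k' x β z))) := by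
  rw [IZB]
  exact (sum_sum_sum_mul_comm _ _).trans (h.sum_sum_sum_mul _)

theorem SupportedOnGraph.IZKgB_eq (h : SupportedOnGraph s f) :
    IZKgB s = ∑ k, ∑ z, (∑ x, s k x (f k) z) *
      log (((∑ x, s k x (f k) z) * (∑ k', ∑ x, ∑ z', s k' x (f k) z')) /
        ((∑ k', ∑ x, s k' x (f k) z) * (∑ x, ∑ z', s k x (f k) z'))) :=
  h.sum_sum_sum_mul _

theorem SupportedOnGraph.IZB_add_IZKgB_add_entropy (hs0 : ∀ k x β z, 0 ≤ s k x β z)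
    (h : SupportedOnGraph s f) {w : K → Z → ℝ} (hw : ∀ k z, w k z = ∑ x, ∑ β, s k x β z) :
    IZB s + IZKgB s + ∑ k, (∑ z, w k z) * log (∑ z, w k z)
      = ∑ k, ∑ z, w k z * log (w k z / ∑ k', w k' z) := by
  have hw_graph : ∀ k z, w k z = ∑ x, s k x (f k) z := fun k z => by
    rw [hw]
    exact sum_congr rfl fun x _ => Fintype.sum_eq_single _ fun β hβ => h k x β z hβ
  have hw0 : ∀ k z, 0 ≤ w k z := fun k z => by
    rw [hw_graph]
    exact sum_nonneg fun x _ => hs0 ..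
  have hH : ∑ k, (∑ z, w k z) * log (∑ z, w k z)
      = ∑ k, ∑ z, w k z * log (∑ x, ∑ z', s k x (f k) z') := by
    refine sum_congr rfl fun k _ => ?_
    simp only [hw_graph k]
    rw [sum_mul, sum_comm (γ := Z)]
  have hwZ : ∀ z, ∑ k, ∑ x, ∑ β, s k x β z = ∑ k, w k z :=
    fun z => sum_congr rfl fun k _ => (hw k z).symm
  simp only [h.IZB_eq, h.IZKgB_eq, hH, hwZ, ← hw_graph, ← sum_add_distrib, ← mul_add]
  refine sum_congr rfl fun k _ => sum_congr rfl fun z _ => ?_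
  rcases (hw0 k z).eq_or_lt with hv | hv
  · rw [← hv, zero_mul, zero_mul]
  have ha : w k z ≤ ∑ k', ∑ x, s k' x (f k) z := by
    rw [hw_graph]
    exact single_le_sum (fun k' _ => sum_nonneg fun x _ => hs0 k' x (f k) z) (mem_univ k)
  have hd : w k z ≤ ∑ x, ∑ z', s k x (f k) z' := by
    rw [hw_graph]
    exact sum_le_sum fun x _ => single_le_sum (fun z' _ => hs0 k x (f k) z') (mem_univ z)
  have hb : ∑ x, ∑ z', s k x (f k) z' ≤ ∑ k', ∑ x, ∑ z', s k' x (f k) z' :=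
    single_le_sum (fun k' _ => sum_nonneg fun x _ => sum_nonneg fun z' _ => hs0 k' x (f k) z')
      (mem_univ k)
  have hc : w k z ≤ ∑ k', w k' z := single_le_sum (fun k' _ => hw0 k' z) (mem_univ k)
  rw [log_div_mul_add_log_mul_div_add_log hv.ne' (hv.trans_le ha).ne'
    (hv.trans_le (hd.trans hb)).ne' (hv.trans_le hc).ne' (hv.trans_le hd).ne']

end Graph

theorem adversarial_loss_decomposition_general {K X B Z : Type*}
    [Fintype K] [Fintype X] [Fintype B] [Fintype Z] [DecidableEq B]
    [Nonempty K]
    (p : K → X → ℝ) (hp0 : ∀ k x, 0 ≤ p k x)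
    (pK : K → ℝ) (hpK : ∀ k, pK k = ∑ x, p k x)
    (f : K → B)
    (q : X → Z → ℝ) (hq0 : ∀ x z, 0 ≤ q x z) (hq1 : ∀ x, ∑ z, q x z = 1)
    (s : K → X → B → Z → ℝ)
    (hs : ∀ k x β z, s k x β z = if β = f k then p k x * q x z else 0)
    (sKZ : K → Z → ℝ) (hsKZ : ∀ k z, sKZ k z = ∑ x, ∑ β, s k x β z) :
    IsGreatest
      {v : ℝ | ∃ D : Z → K → ℝ, (∀ z k, 0 ≤ D z k) ∧ (∀ z, ∑ k, D z k = 1) ∧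
        (∀ k z, 0 < sKZ k z → 0 < D z k) ∧
        v = ∑ k, ∑ z, sKZ k z * Real.log (D z k)}
      (IZB s + IZKgB s - (-∑ k, pK k * Real.log (pK k)))
    ∧ ∀ D : Z → K → ℝ, (∀ z k, 0 ≤ D z k) → (∀ z, ∑ k, D z k = 1) →
        (∀ z k, 0 < ∑ k', sKZ k' z → D z k = sKZ k z / ∑ k', sKZ k' z) →
        ∑ k, ∑ z, sKZ k z * Real.log (D z k)
          = IZB s + IZKgB s - (-∑ k, pK k * Real.log (pK k)) := by
  have hs0 : ∀ k x β z, 0 ≤ s k x β z := fun k x β z => by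
    rw [hs]
    split_ifs
    exacts [mul_nonneg (hp0 k x) (hq0 x z), le_rfl]
  have hgraph : SupportedOnGraph s f := fun k x β z hβ => by rw [hs, if_neg hβ]
  have hsKZ0 : ∀ k z, 0 ≤ sKZ k z := fun k z => by
    rw [hsKZ]
    exact sum_nonneg fun x _ => sum_nonneg fun β _ => hs0 k x β z
  have hpK_eq : ∀ k, pK k = ∑ z, sKZ k z := fun k => by
    simp only [hpK, hsKZ, hs, sum_ite_eq', mem_univ, if_true]
    rw [sum_comm]
    simp only [← mul_sum, hq1, mul_one]
  have hvalue : IZB s + IZKgB s - (-∑ k, pK k * log (pK k))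
      = ∑ k, ∑ z, sKZ k z * log (sKZ k z / ∑ k', sKZ k' z) := by
    rw [sub_neg_eq_add]
    simp only [hpK_eq]
    exact hgraph.IZB_add_IZKgB_add_entropy hs0 hsKZ
  rw [hvalue]
  exact ⟨isGreatest_sum_sum_mul_log_posterior hsKZ0,
    fun D _ _ hD => sum_sum_mul_log_eq_of_eq_posterior hsKZ0 hD⟩

/-- **Information decomposition of the adversarial loss (Lemma 4.2, first part).**
The supremum of the discriminator log-likelihood over kernels `D` from `Z` to `K`
(positive on the support of `s_KZ`) equals `I_s(Z;B) + I_s(Z;K|B) - H(p_K)`, and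
is attained at the posterior `D k|z = s_KZ k z / ∑ k', s_KZ k' z`. -/
theorem adversarial_loss_decomposition {K X B Z : Type*}
    [Fintype K] [Fintype X] [Fintype B] [Fintype Z] [DecidableEq B]
    [Nonempty K] [Nonempty X] [Nonempty B] [Nonempty Z]
    (p : K → X → ℝ) (hp0 : ∀ k x, 0 ≤ p k x) (hp1 : ∑ k, ∑ x, p k x = 1)
    (pK : K → ℝ) (hpK : ∀ k, pK k = ∑ x, p k x)
    (f : K → B)
    (q : X → Z → ℝ) (hq0 : ∀ x z, 0 ≤ q x z) (hq1 : ∀ x, ∑ z, q x z = 1)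
    (s : K → X → B → Z → ℝ)
    (hs : ∀ k x β z, s k x β z = if β = f k then p k x * q x z else 0)
    (sKZ : K → Z → ℝ) (hsKZ : ∀ k z, sKZ k z = ∑ x, ∑ β, s k x β z) :
    IsGreatest
      {v : ℝ | ∃ D : Z → K → ℝ, (∀ z k, 0 ≤ D z k) ∧ (∀ z, ∑ k, D z k = 1) ∧
        (∀ k z, 0 < sKZ k z → 0 < D z k) ∧
        v = ∑ k, ∑ z, sKZ k z * Real.log (D z k)}
      (IZB s + IZKgB s - (-∑ k, pK k * Real.log (pK k)))
    ∧ ∀ D : Z → K → ℝ, (∀ z k, 0 ≤ D z k) → (∀ z, ∑ k, D z k = 1) →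
        (∀ z k, 0 < ∑ k', sKZ k' z → D z k = sKZ k z / ∑ k', sKZ k' z) →
        ∑ k, ∑ z, sKZ k z * Real.log (D z k)
          = IZB s + IZKgB s - (-∑ k, pK k * Real.log (pK k)) :=
  adversarial_loss_decomposition_general p hp0 pK hpK f q hq0 hq1 s hs sKZ hsKZ
end

section
/- Let X, Y, U, B, Z be nonempty finite types, let p be a pmf on X × Y with marginal p_X, and let κ be a kernel from X to U × B × Z. Define the pmf π on X × Y × U × B × Z by π(x,y,u,β,z) = p(x,y)·κ(u,β,z|x). Then, with mutual informations computed from the corresponding marginals of π, I_π(X;(U,B,Z)) + I_π(Y;Z) ≤ H(p_X) + I_p(X;Y). -/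
/-- Mutual information of a joint `r` on `A × C`, with marginals computed as sums:
`I_r(A;C) = ∑ a c, r a c * log (r a c / (r_A a * r_C c))`. -/
noncomputable def MI2 {A C : Type*} [Fintype A] [Fintype C] (r : A → C → ℝ) : ℝ :=
  ∑ a, ∑ c, r a c * Real.log (r a c / ((∑ c', r a c') * (∑ a', r a' c)))

open Finset in
/-- Entropy bound: `MI2 f ≤ H(row marginal)` for any nonnegative `f`. -/
lemma MI2_le_neg_sum_log {X W : Type*} [Fintype X] [Fintype W] (f : X → W → ℝ)
    (h0 : ∀ x w, 0 ≤ f x w) :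
    MI2 f ≤ -∑ x, (∑ w, f x w) * Real.log (∑ w, f x w) := by
  rw [MI2, ← sub_nonpos, sub_neg_eq_add, ← Finset.sum_add_distrib]
  apply Finset.sum_nonpos
  intro x _
  rw [Finset.sum_mul, ← Finset.sum_add_distrib]
  apply Finset.sum_nonpos
  intro w _
  rcases eq_or_lt_of_le (h0 x w) with h | h
  · simp [← h]
  have hfX : f x w ≤ ∑ w', f x w' := Finset.single_le_sum (fun i _ => h0 x i) (mem_univ w)
  have hfW : f x w ≤ ∑ x', f x' w := Finset.single_le_sum (fun i _ => h0 i w) (mem_univ x)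
  have hfX0 : (0:ℝ) < ∑ w', f x w' := lt_of_lt_of_le h hfX
  have hfW0 : (0:ℝ) < ∑ x', f x' w := lt_of_lt_of_le h hfW
  rw [Real.log_div (ne_of_gt h) (by positivity), Real.log_mul (ne_of_gt hfX0) (ne_of_gt hfW0)]
  have h1 : Real.log (f x w) ≤ Real.log (∑ x', f x' w) := Real.log_le_log h hfW
  nlinarith [mul_le_mul_of_nonneg_left h1 h.le]

open Finset in
/-- Data processing inequality: `I(Y;Z) ≤ I(X;Y)` for the Markov chain `Y — X — Z`. -/
lemma MI2_comp_le {X Y Z : Type*} [Fintype X] [Fintype Y] [Fintype Z]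
    (p : X → Y → ℝ) (hp0 : ∀ x y, 0 ≤ p x y)
    (κ : X → Z → ℝ) (hκ0 : ∀ x z, 0 ≤ κ x z) (hκ1 : ∀ x, ∑ z, κ x z = 1) :
    MI2 (fun y z => ∑ x, p x y * κ x z) ≤ MI2 p := by
  set r : Y → Z → ℝ := fun y z => ∑ x, p x y * κ x z with hr
  set pX : X → ℝ := fun x => ∑ y, p x y with hpX
  set pY : Y → ℝ := fun y => ∑ x, p x y with hpY
  set rZ : Z → ℝ := fun z => ∑ y, r y z with hrZ
  have hr0 : ∀ y z, 0 ≤ r y z := fun y z =>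
    Finset.sum_nonneg fun x _ => mul_nonneg (hp0 x y) (hκ0 x z)
  have hrow : ∀ y, ∑ z, r y z = pY y := by
    intro y
    rw [hr, Finset.sum_comm]
    exact Finset.sum_congr rfl fun x _ => by rw [← Finset.mul_sum, hκ1, mul_one]
  have hL : MI2 r = ∑ y, ∑ z, r y z * Real.log (r y z / (pY y * rZ z)) := by
    rw [MI2]
    exact Finset.sum_congr rfl fun y _ => Finset.sum_congr rfl fun z _ => by rw [hrow]
  have hL2 : MI2 r = ∑ x, ∑ y, ∑ z,
      (p x y * κ x z) * Real.log (r y z / (pY y * rZ z)) := by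
    rw [hL]
    have e : ∀ y, ∑ z, r y z * Real.log (r y z / (pY y * rZ z))
        = ∑ z, ∑ x, (p x y * κ x z) * Real.log (r y z / (pY y * rZ z)) := by
      intro y
      refine Finset.sum_congr rfl fun z _ => ?_
      simp only [hr]
      rw [Finset.sum_mul]
    calc ∑ y, ∑ z, r y z * Real.log (r y z / (pY y * rZ z))
        = ∑ y, ∑ z, ∑ x, (p x y * κ x z) * Real.log (r y z / (pY y * rZ z)) :=
          Finset.sum_congr rfl fun y _ => e y
      _ = ∑ y, ∑ x, ∑ z, (p x y * κ x z) * Real.log (r y z / (pY y * rZ z)) :=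
          Finset.sum_congr rfl fun y _ => Finset.sum_comm
      _ = ∑ x, ∑ y, ∑ z, (p x y * κ x z) * Real.log (r y z / (pY y * rZ z)) :=
          Finset.sum_comm
  have hR2 : MI2 p = ∑ x, ∑ y, ∑ z,
      (p x y * κ x z) * Real.log (p x y / (pX x * pY y)) := by
    rw [MI2]
    refine Finset.sum_congr rfl fun x _ => Finset.sum_congr rfl fun y _ => ?_
    rw [show (∑ c', p x c') = pX x from rfl, show (∑ a', p a' y) = pY y from rfl,
      ← Finset.sum_mul, ← Finset.mul_sum, hκ1, mul_one]
  rw [hL2, hR2, ← sub_nonpos, ← Finset.sum_sub_distrib]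
  simp_rw [← Finset.sum_sub_distrib]
  have key : ∀ x y z,
      (p x y * κ x z) * Real.log (r y z / (pY y * rZ z))
        - (p x y * κ x z) * Real.log (p x y / (pX x * pY y))
      ≤ κ x z * pX x / rZ z * r y z - p x y * κ x z := by
    intro x y z
    have hpX0 : (0:ℝ) ≤ pX x := Finset.sum_nonneg fun i _ => hp0 x i
    have hrZ0 : (0:ℝ) ≤ rZ z := Finset.sum_nonneg fun i _ => hr0 i z
    rcases eq_or_lt_of_le (mul_nonneg (hp0 x y) (hκ0 x z)) with h | h
    · rw [← h]
      have hn : 0 ≤ κ x z * pX x / rZ z * r y z := by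
        have := hr0 y z; have := hκ0 x z; positivity
      simp only [zero_mul, sub_zero, zero_sub, sub_zero]
      linarith
    · have hp : 0 < p x y := by
        rcases (hp0 x y).lt_or_eq with h' | h'
        · exact h'
        · exfalso; rw [← h'] at h; simp at h
      have hκp : 0 < κ x z := by
        rcases (hκ0 x z).lt_or_eq with h' | h'
        · exact h'
        · exfalso; rw [← h'] at h; simp at h
      have hpXp : 0 < pX x :=
        lt_of_lt_of_le hp (Finset.single_le_sum (fun i _ => hp0 x i) (mem_univ y))
      have hpYp : 0 < pY y :=
        lt_of_lt_of_le hp (Finset.single_le_sum (fun i _ => hp0 i y) (mem_univ x))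
      have hrp : 0 < r y z :=
        lt_of_lt_of_le h (Finset.single_le_sum
          (fun i _ => mul_nonneg (hp0 i y) (hκ0 i z)) (mem_univ x))
      have hrZp : 0 < rZ z :=
        lt_of_lt_of_le hrp (Finset.single_le_sum (fun i _ => hr0 i z) (mem_univ y))
      set m := p x y * κ x z with hm
      set n := κ x z * pX x / rZ z * r y z with hn
      have hnp : 0 < n := by rw [hn]; positivity
      have hnm : n / m = pX x * r y z / (rZ z * p x y) := by
        rw [hn, hm]; field_simp
      have hlog : Real.log (n / m) ≤ n / m - 1 := Real.log_le_sub_one_of_pos (by positivity)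
      have h2 : m * Real.log (n / m) ≤ n - m := by
        have h3 : m * (n / m) = n := by field_simp
        nlinarith [mul_le_mul_of_nonneg_left hlog (le_of_lt h)]
      have e1 : Real.log (r y z / (pY y * rZ z))
          = Real.log (r y z) - Real.log (pY y) - Real.log (rZ z) := by
        rw [Real.log_div hrp.ne' (by positivity), Real.log_mul hpYp.ne' hrZp.ne']; ring
      have e2 : Real.log (p x y / (pX x * pY y))
          = Real.log (p x y) - Real.log (pX x) - Real.log (pY y) := by
        rw [Real.log_div hp.ne' (by positivity), Real.log_mul hpXp.ne' hpYp.ne']; ring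
      have e3 : Real.log (n / m)
          = Real.log (pX x) + Real.log (r y z) - Real.log (rZ z) - Real.log (p x y) := by
        rw [hnm, Real.log_div (by positivity) (by positivity),
          Real.log_mul hpXp.ne' hrp.ne', Real.log_mul hrZp.ne' hp.ne']; ring
      rw [e1, e2]
      rw [e3] at h2
      nlinarith [h2]
  calc ∑ x, ∑ y, ∑ z, ((p x y * κ x z) * Real.log (r y z / (pY y * rZ z))
        - (p x y * κ x z) * Real.log (p x y / (pX x * pY y)))
      ≤ ∑ x, ∑ y, ∑ z, (κ x z * pX x / rZ z * r y z - p x y * κ x z) := by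
        refine Finset.sum_le_sum fun x _ => Finset.sum_le_sum fun y _ =>
          Finset.sum_le_sum fun z _ => key x y z
    _ ≤ 0 := by
        simp only [Finset.sum_sub_distrib]
        rw [sub_nonpos]
        have hm : ∑ x, ∑ y, ∑ z, p x y * κ x z = ∑ x, pX x := by
          refine Finset.sum_congr rfl fun x _ => ?_
          refine Finset.sum_congr rfl fun y _ => ?_
          rw [← Finset.mul_sum, hκ1, mul_one]
        have hn : ∑ x, ∑ y, ∑ z, κ x z * pX x / rZ z * r y z ≤ ∑ x, pX x := by
          have step1 : ∀ x, ∑ y, ∑ z, κ x z * pX x / rZ z * r y z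
              ≤ ∑ z, κ x z * pX x := by
            intro x
            rw [Finset.sum_comm]
            refine Finset.sum_le_sum fun z _ => ?_
            rw [← Finset.mul_sum]
            rcases eq_or_ne (rZ z) 0 with h | h
            · rw [show (∑ y, r y z) = rZ z from rfl, h, mul_zero]
              have hpX0 : (0:ℝ) ≤ pX x := Finset.sum_nonneg fun i _ => hp0 x i
              exact mul_nonneg (hκ0 x z) hpX0
            · rw [show (∑ y, r y z) = rZ z from rfl, div_mul_cancel₀ _ h]
          calc ∑ x, ∑ y, ∑ z, κ x z * pX x / rZ z * r y z
              ≤ ∑ x, ∑ z, κ x z * pX x := Finset.sum_le_sum fun x _ => step1 x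
            _ = ∑ x, pX x := by
                refine Finset.sum_congr rfl fun x _ => ?_
                rw [← Finset.sum_mul, hκ1, one_mul]
        rw [hm]
        exact hn

/-- **The sum of data and label orthogonal information is bounded.**
For the joint `π x y u β z = p x y * κ u β z|x`,
`I_π(X;(U,B,Z)) + I_π(Y;Z) ≤ H(p_X) + I_p(X;Y)`, where the mutual-information
terms are computed from the corresponding marginals of `π`. -/
theorem orthogonal_information_upper_bound {X Y U B Z : Type*}
    [Fintype X] [Fintype Y] [Fintype U] [Fintype B] [Fintype Z]
    [Nonempty X] [Nonempty Y] [Nonempty U] [Nonempty B] [Nonempty Z]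
    (p : X → Y → ℝ) (hp0 : ∀ x y, 0 ≤ p x y) (hp1 : ∑ x, ∑ y, p x y = 1)
    (κ : X → U → B → Z → ℝ) (hκ0 : ∀ x u β z, 0 ≤ κ x u β z)
    (hκ1 : ∀ x, ∑ u, ∑ β, ∑ z, κ x u β z = 1)
    (π : X → Y → U → B → Z → ℝ)
    (hπ : ∀ x y u β z, π x y u β z = p x y * κ x u β z) :
    MI2 (fun x (w : U × B × Z) => ∑ y, π x y w.1 w.2.1 w.2.2)
      + MI2 (fun y z => ∑ x, ∑ u, ∑ β, π x y u β z)
      ≤ (-∑ x, (∑ y, p x y) * Real.log (∑ y, p x y)) + MI2 p := by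
  have h1 : MI2 (fun x (w : U × B × Z) => ∑ y, π x y w.1 w.2.1 w.2.2)
      ≤ -∑ x, (∑ y, p x y) * Real.log (∑ y, p x y) := by
    have hmain := MI2_le_neg_sum_log (fun x (w : U × B × Z) => ∑ y, π x y w.1 w.2.1 w.2.2)
      (fun x w => Finset.sum_nonneg fun y _ => by
        rw [hπ]; exact mul_nonneg (hp0 x y) (hκ0 x w.1 w.2.1 w.2.2))
    have hmarg : ∀ x, (∑ w : U × B × Z, ∑ y, π x y w.1 w.2.1 w.2.2) = ∑ y, p x y := by
      intro x
      rw [Finset.sum_comm]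
      refine Finset.sum_congr rfl fun y _ => ?_
      simp only [hπ]
      rw [← Finset.mul_sum]
      have hκsum : (∑ w : U × B × Z, κ x w.1 w.2.1 w.2.2) = 1 := by
        rw [Fintype.sum_prod_type]
        simp only [Fintype.sum_prod_type]
        exact hκ1 x
      rw [hκsum, mul_one]
    simpa only [hmarg] using hmain
  have h2 : MI2 (fun y z => ∑ x, ∑ u, ∑ β, π x y u β z) ≤ MI2 p := by
    have hey : (fun y z => ∑ x, ∑ u, ∑ β, π x y u β z)
        = fun y z => ∑ x, p x y * (∑ u, ∑ β, κ x u β z) := by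
      funext y z
      refine Finset.sum_congr rfl fun x _ => ?_
      simp only [hπ, ← Finset.mul_sum]
    rw [hey]
    refine MI2_comp_le p hp0 (fun x z => ∑ u, ∑ β, κ x u β z)
      (fun x z => Finset.sum_nonneg fun u _ => Finset.sum_nonneg fun β _ => hκ0 x u β z)
      (fun x => ?_)
    have : (∑ z, ∑ u, ∑ β, κ x u β z) = ∑ u, ∑ β, ∑ z, κ x u β z := by
      rw [Finset.sum_comm]
      exact Finset.sum_congr rfl fun u _ => Finset.sum_comm
    rw [this]
    exact hκ1 x
  linarith
end
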